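/- Let H be a harmonic candidate sequence on a metrizable Choquet simplex K. Then for every ordinal γ, the function u_γ^H is concave; moreover, whenever u_γ^H is real-valued (and hence upper semicontinuous), it is supharmonic. -/

import Mathlib

open Filter Topology Set
open scoped ENNReal

/-- A candidate sequence on a topological space `M`: a nondecreasing sequence of
nonnegative functions, starting at `0`, with bounded pointwise limit. -/
structure CandidateSeq (M : Type*) [TopologicalSpace M] where
  h : ℕ → M → ℝ
  nonneg : ∀ k x, 0 ≤ h k x
  mono : ∀ x, Monotone fun k => h k x
  zero : ∀ x, h 0 x = 0
  limFn : M → ℝ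
  tendsto_limFn : ∀ x, Tendsto (fun k => h k x) atTop (𝓝 (limFn x))
  bddAbove : ∃ B : ℝ, ∀ x, limFn x ≤ B

namespace CandidateSeq

variable {M : Type*} [TopologicalSpace M]

/-- The upper semicontinuous envelope of a `[0,∞]`-valued function:
`f~(x) = limsup_{y → x} f(y)`, the limsup including the value at `x` itself. -/
noncomputable def uscEnv (f : M → ℝ≥0∞) : M → ℝ≥0∞ := fun x => Filter.limsup f (𝓝 x)

/-- The tail functions `τ_k = h - h_k` (nonnegative, viewed in `[0,∞]`). -/
noncomputable def tau (H : CandidateSeq M) (k : ℕ) : M → ℝ≥0∞ :=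
  fun x => ENNReal.ofReal (H.limFn x - H.h k x)

/-- The transfinite sequence `u_α^H` associated to a candidate sequence, defined by
transfinite recursion: `u_0 ≡ 0`; `u_{α+1} = lim_k (u_α + τ_k)~` (the envelopes are
nonincreasing in `k`, so the limit is the infimum); at limit ordinals,
`u_α = (sup_{β<α} u_β)~`. Values are taken in `[0,∞]`. -/
noncomputable def u (H : CandidateSeq M) (α : Ordinal) : M → ℝ≥0∞ :=
  Ordinal.limitRecOn α
    (fun _ => 0)
    (fun _ v => fun x => ⨅ k : ℕ, uscEnv (fun y => v y + H.tau k y) x)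
    (fun o _ ih => uscEnv (fun y => ⨆ p : {β : Ordinal // β < o}, ih p.1 p.2 y))

/-- The order of accumulation of a candidate sequence: the least ordinal `α`
with `u_α = u_{α+1}`. -/
noncomputable def orderOfAccum (H : CandidateSeq M) : Ordinal :=
  sInf {α : Ordinal | H.u α = H.u (α + 1)}

/-- The restriction `H|_S` of a candidate sequence to a subset, as a candidate
sequence on the subspace `S`. -/
def restrict (H : CandidateSeq M) (S : Set M) : CandidateSeq S where
  h k x := H.h k x.1
  nonneg k x := H.nonneg k x.1
  mono x := H.mono x.1
  zero x := H.zero x.1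
  limFn x := H.limFn x.1
  tendsto_limFn x := H.tendsto_limFn x.1
  bddAbove := H.bddAbove.imp fun B hB x => hB x.1

/-- The pullback `F ∘ π` of a candidate sequence along a map. -/
def comp {K : Type*} [TopologicalSpace K] (F : CandidateSeq K) (π : M → K) :
    CandidateSeq M where
  h k x := F.h k (π x)
  nonneg k x := F.nonneg k (π x)
  mono x := F.mono (π x)
  zero x := F.zero (π x)
  limFn x := F.limFn (π x)
  tendsto_limFn x := F.tendsto_limFn (π x)
  bddAbove := F.bddAbove.imp fun B hB x => hB (π x)

/-- `H` uniformly dominates `F`. -/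
def UnifDominates (H F : CandidateSeq M) : Prop :=
  ∀ ε : ℝ, 0 < ε → ∀ k, ∃ l, ∀ x, F.h k x ≤ H.h l x + ε

/-- Uniform equivalence of candidate sequences. -/
def UnifEquiv (H F : CandidateSeq M) : Prop :=
  UnifDominates H F ∧ UnifDominates F H

end CandidateSeq

open MeasureTheory

section Simplex

variable {V : Type*} [AddCommGroup V] [Module ℝ V] [TopologicalSpace V] [MeasurableSpace V]

/-- A function on (the subtype of) a convex set `K` is affine if it respects
convex combinations of points of `K`. -/
def AffineOnSet (K : Set V) (f : K → ℝ) : Prop :=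
  ∀ (x y z : K) (t : ℝ), 0 ≤ t → t ≤ 1 →
    (z : V) = t • (x : V) + (1 - t) • (y : V) → f z = t * f x + (1 - t) * f y

/-- A Borel probability measure `Q` on `K` has barycenter `b ∈ K` if
`f(b) = ∫ f dQ` for every continuous affine `f : K → ℝ`. -/
def IsBarycenterOf (K : Set V) (Q : Measure K) (b : K) : Prop :=
  ∀ f : K → ℝ, Continuous f → AffineOnSet K f → f b = ∫ x, f x ∂Q

/-- A function `f : K → ℝ` is harmonic if `f(b) = ∫ f dQ` for every Borel probability
measure `Q` on `K` with barycenter `b`. -/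
def HarmonicOnSet (K : Set V) (f : K → ℝ) : Prop :=
  ∀ (b : K) (Q : Measure K), IsProbabilityMeasure Q → IsBarycenterOf K Q b →
    f b = ∫ x, f x ∂Q

/-- A function `f : K → ℝ` is supharmonic if `f(b) ≥ ∫ f dQ` for every Borel probability
measure `Q` on `K` with barycenter `b`. -/
def SupharmonicOnSet (K : Set V) (f : K → ℝ) : Prop :=
  ∀ (b : K) (Q : Measure K), IsProbabilityMeasure Q → IsBarycenterOf K Q b →
    ∫ x, f x ∂Q ≤ f b

/-- The set of extreme points of `K`, viewed inside the subtype `K`. -/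
def extremeSubset (K : Set V) : Set K := {x : K | (x : V) ∈ K.extremePoints ℝ}

/-- `P` witnesses that the compact convex metrizable set `K` is a (metrizable) Choquet
simplex, via Choquet's characterization: `P x` is the unique Borel probability measure on
`K` vanishing off the extreme points of `K` whose barycenter is `x`. -/
structure IsChoquetKernel (K : Set V) (P : K → Measure K) : Prop where
  prob : ∀ x, IsProbabilityMeasure (P x)
  ext_null : ∀ x, P x (extremeSubset K)ᶜ = 0
  bary : ∀ x, IsBarycenterOf K (P x) x
  unique : ∀ (x : K) (Q : Measure K), IsProbabilityMeasure Q →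
    Q (extremeSubset K)ᶜ = 0 → IsBarycenterOf K Q x → Q = P x

end Simplex

/-!
Harmonic functions are affine (test them against `t δ_x + (1 - t) δ_y`), so every tail
`τ_k = h - h_k` is a nonnegative affine function. Concavity survives sums, infima, directed
suprema and the u.s.c. envelope, the latter because `(x, y) ↦ t x + (1 - t) y` is continuous;
hence every `u_γ` is concave by transfinite induction. If `g` is u.s.c., concave and bounded
below on the compact convex set `K`, its truncated hypograph is compact and convex, so when
`g b < c` Hahn–Banach separates it from `(b, c)` by a hyperplane, i.e. some continuous affine
`a ≥ g` has `a b < c`. Integrating `a` against a measure `Q` with barycenter `b` gives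
`∫ g dQ ≤ g b`.
-/

namespace ENNReal

theorem limsup_add_limsup_le_limsup_prod {α β : Type*} {F : Filter α} {G : Filter β} [F.NeBot]
    [G.NeBot] (f : α → ℝ≥0∞) (g : β → ℝ≥0∞) :
    limsup f F + limsup g G ≤ limsup (fun p : α × β => f p.1 + g p.2) (F ×ˢ G) := by
  rw [limsup_eq (f := F ×ˢ G)]
  refine le_sInf fun a ha => ?_
  obtain ⟨s, hs, t, ht, hst⟩ := eventually_prod_iff.mp ha
  have : Nonempty {x // s x} := (Filter.nonempty_of_mem hs).to_subtype
  have : Nonempty {y // t y} := (Filter.nonempty_of_mem ht).to_subtype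
  calc limsup f F + limsup g G ≤ (⨆ x : {x // s x}, f x) + ⨆ y : {y // t y}, g y :=
        add_le_add
          (limsup_le_of_le (by isBoundedDefault) (hs.mono fun x hx => le_iSup_of_le ⟨x, hx⟩ le_rfl))
          (limsup_le_of_le (by isBoundedDefault) (ht.mono fun y hy => le_iSup_of_le ⟨y, hy⟩ le_rfl))
    _ ≤ a := iSup_add_iSup_le fun x y => hst x.2 y.2

end ENNReal

theorem UpperSemicontinuous.ennreal_toReal {M : Type*} [TopologicalSpace M] {f : M → ℝ≥0∞}
    (hf : UpperSemicontinuous f) (hfin : ∀ x, f x ≠ ⊤) :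
    UpperSemicontinuous fun x => (f x).toReal := fun x _ hr =>
  (hf x _ ((ENNReal.lt_ofReal_iff_toReal_lt (hfin x)).mpr hr)).mono
    fun _ => ENNReal.toReal_lt_of_lt_ofReal

namespace CandidateSeq

section Envelope

variable {M : Type*} [TopologicalSpace M]

theorem le_uscEnv (f : M → ℝ≥0∞) (x : M) : f x ≤ uscEnv f x := by
  rw [uscEnv, limsup_eq]
  exact le_sInf fun a ha => ha.self_of_nhds

theorem upperSemicontinuous_uscEnv (f : M → ℝ≥0∞) : UpperSemicontinuous (uscEnv f) := by
  intro x y hy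
  obtain ⟨z, hfz, hzy⟩ := exists_between hy
  filter_upwards [eventually_eventually_nhds.mpr (eventually_lt_of_limsup_lt hfz)] with w hw
  exact (limsup_le_of_le (by isBoundedDefault) (hw.mono fun v hv => hv.le)).trans_lt hzy

theorem u_zero (H : CandidateSeq M) : H.u 0 = 0 :=
  Ordinal.limitRecOn_zero _ _ _

theorem u_add_one (H : CandidateSeq M) (α : Ordinal) :
    H.u (α + 1) = fun x => ⨅ k : ℕ, uscEnv (fun y => H.u α y + H.tau k y) x :=
  Ordinal.limitRecOn_add_one _ _ _ _

theorem u_limit (H : CandidateSeq M) {o : Ordinal} (ho : Order.IsSuccLimit o) :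
    H.u o = uscEnv (fun y => ⨆ β : {β : Ordinal // β < o}, H.u β y) :=
  Ordinal.limitRecOn_limit _ _ _ _ ho

theorem u_le_u_add_one (H : CandidateSeq M) (α : Ordinal) : H.u α ≤ H.u (α + 1) := by
  intro x
  rw [u_add_one]
  exact le_iInf fun k => le_self_add.trans (le_uscEnv _ x)

theorem monotone_u (H : CandidateSeq M) : Monotone H.u := by
  intro β α hβα
  induction α using Ordinal.limitRecOn generalizing β with
  | zero => rw [nonpos_iff_eq_zero.mp hβα]
  | add_one α ih =>
    rcases hβα.lt_or_eq with hβα | rfl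
    · exact (ih (Order.lt_add_one_iff.mp hβα)).trans (H.u_le_u_add_one α)
    · exact le_rfl
  | limit o ho _ =>
    rcases hβα.eq_or_lt with rfl | hβo
    · exact le_rfl
    · intro x
      rw [H.u_limit ho]
      exact (le_iSup (fun β : {β : Ordinal // β < o} => H.u β x) ⟨β, hβo⟩).trans (le_uscEnv _ x)

theorem upperSemicontinuous_u (H : CandidateSeq M) (γ : Ordinal) :
    UpperSemicontinuous (H.u γ) := by
  induction γ using Ordinal.limitRecOn with
  | zero => rw [u_zero]; exact upperSemicontinuous_const
  | add_one α _ =>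
    rw [u_add_one]
    exact upperSemicontinuous_iInf fun k => upperSemicontinuous_uscEnv _
  | limit o ho _ => rw [H.u_limit ho]; exact upperSemicontinuous_uscEnv _

theorem h_le_limFn (H : CandidateSeq M) (k : ℕ) (x : M) : H.h k x ≤ H.limFn x :=
  (H.mono x).ge_of_tendsto (H.tendsto_limFn x) k

end Envelope

end CandidateSeq

section Concavity

variable {V : Type*} [AddCommGroup V] [Module ℝ V] {K : Set V}

def ConcaveOnSet (K : Set V) (g : K → ℝ) : Prop :=
  ∀ (x y z : K) (t : ℝ), 0 ≤ t → t ≤ 1 →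
    (z : V) = t • (x : V) + (1 - t) • (y : V) → t * g x + (1 - t) * g y ≤ g z

def EConcaveOnSet (K : Set V) (w : K → ℝ≥0∞) : Prop :=
  ∀ (x y z : K) (t : ℝ), 0 ≤ t → t ≤ 1 →
    (z : V) = t • (x : V) + (1 - t) • (y : V) →
    ENNReal.ofReal t * w x + ENNReal.ofReal (1 - t) * w y ≤ w z

theorem eConcaveOnSet_zero : EConcaveOnSet K 0 := by
  intro x y z t _ _ _
  simp

theorem AffineOnSet.eConcaveOnSet_ofReal {g : K → ℝ} (hg : AffineOnSet K g) (hg0 : ∀ x, 0 ≤ g x) :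
    EConcaveOnSet K fun x => ENNReal.ofReal (g x) := by
  intro x y z t ht0 ht1 hz
  dsimp only
  rw [hg x y z t ht0 ht1 hz, ENNReal.ofReal_add (mul_nonneg ht0 (hg0 x))
    (mul_nonneg (sub_nonneg.mpr ht1) (hg0 y)), ENNReal.ofReal_mul ht0,
    ENNReal.ofReal_mul (sub_nonneg.mpr ht1)]

theorem EConcaveOnSet.add {v w : K → ℝ≥0∞} (hv : EConcaveOnSet K v) (hw : EConcaveOnSet K w) :
    EConcaveOnSet K (v + w) := by
  intro x y z t ht0 ht1 hz
  calc ENNReal.ofReal t * (v + w) x + ENNReal.ofReal (1 - t) * (v + w) y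
      = (ENNReal.ofReal t * v x + ENNReal.ofReal (1 - t) * v y) +
          (ENNReal.ofReal t * w x + ENNReal.ofReal (1 - t) * w y) := by
        simp only [Pi.add_apply]; ring
    _ ≤ (v + w) z := add_le_add (hv x y z t ht0 ht1 hz) (hw x y z t ht0 ht1 hz)

theorem EConcaveOnSet.iInf {ι : Sort*} {w : ι → K → ℝ≥0∞} (hw : ∀ i, EConcaveOnSet K (w i)) :
    EConcaveOnSet K fun x => ⨅ i, w i x := by
  intro x y z t ht0 ht1 hz
  refine le_iInf fun i => le_trans ?_ (hw i x y z t ht0 ht1 hz)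
  gcongr <;> exact iInf_le _ i

theorem EConcaveOnSet.iSup_of_directed {ι : Sort*} [Nonempty ι] {w : ι → K → ℝ≥0∞}
    (hdir : Directed (· ≤ ·) w) (hw : ∀ i, EConcaveOnSet K (w i)) :
    EConcaveOnSet K fun x => ⨆ i, w i x := by
  intro x y z t ht0 ht1 hz
  rw [ENNReal.mul_iSup, ENNReal.mul_iSup]
  refine ENNReal.iSup_add_iSup_le fun i j => ?_
  obtain ⟨k, hik, hjk⟩ := hdir i j
  calc ENNReal.ofReal t * w i x + ENNReal.ofReal (1 - t) * w j y
      ≤ ENNReal.ofReal t * w k x + ENNReal.ofReal (1 - t) * w k y := by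
        gcongr
        exacts [hik x, hjk y]
    _ ≤ w k z := hw k x y z t ht0 ht1 hz
    _ ≤ ⨆ i, w i z := le_iSup (fun i => w i z) k

theorem EConcaveOnSet.toReal {w : K → ℝ≥0∞} (hw : EConcaveOnSet K w) (hfin : ∀ x, w x ≠ ⊤) :
    ConcaveOnSet K fun x => (w x).toReal := by
  intro x y z t ht0 ht1 hz
  have h := ENNReal.toReal_mono (hfin z) (hw x y z t ht0 ht1 hz)
  rwa [ENNReal.toReal_add (ENNReal.mul_ne_top ENNReal.ofReal_ne_top (hfin x))
    (ENNReal.mul_ne_top ENNReal.ofReal_ne_top (hfin y)), ENNReal.toReal_mul, ENNReal.toReal_mul,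
    ENNReal.toReal_ofReal ht0, ENNReal.toReal_ofReal (sub_nonneg.mpr ht1)] at h

theorem EConcaveOnSet.uscEnv [TopologicalSpace V] [ContinuousAdd V] [ContinuousConstSMul ℝ V]
    (hK : Convex ℝ K) {w : K → ℝ≥0∞} (hw : EConcaveOnSet K w) :
    EConcaveOnSet K (CandidateSeq.uscEnv w) := by
  intro x y z t ht0 ht1 hz
  let m : K × K → K := fun p =>
    ⟨t • (p.1 : V) + (1 - t) • (p.2 : V), hK p.1.2 p.2.2 ht0 (sub_nonneg.mpr ht1) (by ring)⟩
  have hm : Tendsto m (𝓝 x ×ˢ 𝓝 y) (𝓝 z) := by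
    rw [← nhds_prod_eq, show z = m (x, y) from Subtype.ext hz]
    exact (Continuous.subtype_mk (by fun_prop) _).tendsto _
  calc ENNReal.ofReal t * CandidateSeq.uscEnv w x +
        ENNReal.ofReal (1 - t) * CandidateSeq.uscEnv w y
      = limsup (fun x => ENNReal.ofReal t * w x) (𝓝 x) +
          limsup (fun y => ENNReal.ofReal (1 - t) * w y) (𝓝 y) := by
        simp only [CandidateSeq.uscEnv, ENNReal.limsup_const_mul_of_ne_top ENNReal.ofReal_ne_top]
    _ ≤ limsup (fun p : K × K => ENNReal.ofReal t * w p.1 + ENNReal.ofReal (1 - t) * w p.2)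
          (𝓝 x ×ˢ 𝓝 y) := ENNReal.limsup_add_limsup_le_limsup_prod _ _
    _ ≤ limsup (w ∘ m) (𝓝 x ×ˢ 𝓝 y) :=
        limsup_le_limsup (.of_forall fun p => hw p.1 p.2 (m p) t ht0 ht1 rfl)
    _ ≤ CandidateSeq.uscEnv w z := by
        rw [limsup_comp]
        exact limsup_le_limsup_of_le hm

end Concavity

section TwoPoint

variable {α : Type*} [MeasurableSpace α]

theorem isProbabilityMeasure_smul_dirac_add_smul_dirac {t : ℝ} (ht0 : 0 ≤ t) (ht1 : t ≤ 1)
    (x y : α) :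
    IsProbabilityMeasure
      (ENNReal.ofReal t • Measure.dirac x + ENNReal.ofReal (1 - t) • Measure.dirac y) := by
  constructor
  simp only [Measure.add_apply, Measure.smul_apply, measure_univ, smul_eq_mul, mul_one]
  rw [← ENNReal.ofReal_add ht0 (sub_nonneg.mpr ht1), add_sub_cancel, ENNReal.ofReal_one]

theorem integral_smul_dirac_add_smul_dirac [MeasurableSingletonClass α] {t : ℝ} (ht0 : 0 ≤ t)
    (ht1 : t ≤ 1) (x y : α) (f : α → ℝ) :
    ∫ w, f w ∂(ENNReal.ofReal t • Measure.dirac x + ENNReal.ofReal (1 - t) • Measure.dirac y) =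
      t * f x + (1 - t) * f y := by
  rw [integral_add_measure ((integrable_dirac enorm_lt_top).smul_measure ENNReal.ofReal_ne_top)
      ((integrable_dirac enorm_lt_top).smul_measure ENNReal.ofReal_ne_top),
    integral_smul_measure, integral_smul_measure, integral_dirac, integral_dirac,
    ENNReal.toReal_ofReal ht0, ENNReal.toReal_ofReal (sub_nonneg.mpr ht1), smul_eq_mul,
    smul_eq_mul]

end TwoPoint

theorem HarmonicOnSet.affineOnSet {V : Type*} [AddCommGroup V] [Module ℝ V] [TopologicalSpace V]
    [MeasurableSpace V] {K : Set V} [MeasurableSingletonClass K] {f : K → ℝ}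
    (hf : HarmonicOnSet K f) : AffineOnSet K f := by
  intro x y z t ht0 ht1 hz
  have hbary : IsBarycenterOf K
      (ENNReal.ofReal t • Measure.dirac x + ENNReal.ofReal (1 - t) • Measure.dirac y) z := by
    intro φ _ hφ
    rw [integral_smul_dirac_add_smul_dirac ht0 ht1, hφ x y z t ht0 ht1 hz]
  rw [hf z _ (isProbabilityMeasure_smul_dirac_add_smul_dirac ht0 ht1 x y) hbary,
    integral_smul_dirac_add_smul_dirac ht0 ht1]

namespace CandidateSeq

variable {V : Type*} [AddCommGroup V] [Module ℝ V] [TopologicalSpace V] {K : Set V}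
  (H : CandidateSeq K)

theorem affineOnSet_limFn (haff : ∀ k, AffineOnSet K (H.h k)) : AffineOnSet K H.limFn := by
  intro x y z t ht0 ht1 hz
  refine tendsto_nhds_unique (H.tendsto_limFn z) ?_
  simp_rw [haff _ x y z t ht0 ht1 hz]
  exact ((H.tendsto_limFn x).const_mul t).add ((H.tendsto_limFn y).const_mul (1 - t))

theorem eConcaveOnSet_tau (haff : ∀ k, AffineOnSet K (H.h k)) (k : ℕ) :
    EConcaveOnSet K (H.tau k) := by
  refine AffineOnSet.eConcaveOnSet_ofReal (fun x y z t ht0 ht1 hz => ?_)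
    fun x => sub_nonneg.mpr (H.h_le_limFn k x)
  rw [H.affineOnSet_limFn haff x y z t ht0 ht1 hz, haff k x y z t ht0 ht1 hz]
  ring

theorem eConcaveOnSet_u [ContinuousAdd V] [ContinuousConstSMul ℝ V] (hK : Convex ℝ K)
    (haff : ∀ k, AffineOnSet K (H.h k)) (γ : Ordinal) : EConcaveOnSet K (H.u γ) := by
  induction γ using Ordinal.limitRecOn with
  | zero => rw [u_zero]; exact eConcaveOnSet_zero
  | add_one α ih =>
    rw [u_add_one]
    exact EConcaveOnSet.iInf fun k => (ih.add (H.eConcaveOnSet_tau haff k)).uscEnv hK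
  | limit o ho ih =>
    rw [H.u_limit ho]
    have : Nonempty {β : Ordinal // β < o} := ⟨⟨0, ho.bot_lt⟩⟩
    have hdir : Directed (· ≤ ·) fun β : {β : Ordinal // β < o} => H.u β :=
      (H.monotone_u.comp (Subtype.mono_coe _)).directed_le
    exact (EConcaveOnSet.iSup_of_directed hdir fun β => ih β.1 β.2).uscEnv hK

end CandidateSeq

section Supharmonic

variable {V : Type*} {K : Set V}

def truncHypograph (K : Set V) (g : K → ℝ) (m : ℝ) : Set (V × ℝ) :=
  {p | ∃ hp : p.1 ∈ K, m ≤ p.2 ∧ p.2 ≤ g ⟨p.1, hp⟩}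

theorem ConcaveOnSet.convex_truncHypograph [AddCommGroup V] [Module ℝ V] {g : K → ℝ}
    (hg : ConcaveOnSet K g) (hK : Convex ℝ K) (m : ℝ) : Convex ℝ (truncHypograph K g m) := by
  rintro p ⟨hp, hmp, hpg⟩ q ⟨hq, hmq, hqg⟩ t s ht hs hts
  obtain rfl : s = 1 - t := by linarith
  have hz : (t • p + (1 - t) • q).1 ∈ K := hK hp hq ht hs hts
  have hsnd : (t • p + (1 - t) • q).2 = t * p.2 + (1 - t) * q.2 := by simp
  refine ⟨hz, ?_, ?_⟩
  · calc m = t * m + (1 - t) * m := by ring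
      _ ≤ (t • p + (1 - t) • q).2 := by rw [hsnd]; gcongr
  · calc (t • p + (1 - t) • q).2 ≤ t * g ⟨p.1, hp⟩ + (1 - t) * g ⟨q.1, hq⟩ := by
          rw [hsnd]; gcongr
      _ ≤ g ⟨_, hz⟩ := hg _ _ _ t ht (by linarith) (by simp)

theorem UpperSemicontinuous.isCompact_truncHypograph [TopologicalSpace V] {g : K → ℝ}
    (hKc : IsCompact K) (hg : UpperSemicontinuous g) (m : ℝ) :
    IsCompact (truncHypograph K g m) := by
  have : CompactSpace K := isCompact_iff_compactSpace.mp hKc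
  obtain ⟨M, hM⟩ := (hg.upperSemicontinuousOn univ).bddAbove_of_isCompact isCompact_univ
  have hS : IsCompact {q : K × ℝ | m ≤ q.2 ∧ q.2 ≤ g q.1} := by
    refine (isCompact_univ.prod (isCompact_Icc (a := m) (b := M))).of_isClosed_subset
      ((isClosed_le continuous_const continuous_snd).inter hg.IsClosed_hypograph) ?_
    exact fun q hq => ⟨mem_univ _, hq.1, hq.2.trans (hM ⟨q.1, mem_univ _, rfl⟩)⟩
  convert hS.image (continuous_subtype_val.prodMap continuous_id) using 1
  ext p
  constructor
  · rintro ⟨hp, hmp⟩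
    exact ⟨(⟨p.1, hp⟩, p.2), hmp, rfl⟩
  · rintro ⟨q, hq, rfl⟩
    exact ⟨q.1.2, hq⟩

/- `V` need not be Hausdorff, so Hahn–Banach is applied to the closed set `closure {(b, c)}`
rather than to the point; it only differs from `{(b, c)}` by points with first coordinate outside
`K`, because `K` is T₁. -/
theorem disjoint_truncHypograph_closure_singleton [TopologicalSpace V] [T1Space K] {g : K → ℝ}
    {m : ℝ} {b : K} {c : ℝ} (hbc : g b < c) :
    Disjoint (truncHypograph K g m) (closure {((b : V), c)}) := by
  refine Set.disjoint_left.mpr fun p ⟨hp, _, hpg⟩ hpbc => ?_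
  have hspec : ((b : V), c) ⤳ p := specializes_iff_mem_closure.mpr hpbc
  have hb : b = ⟨p.1, hp⟩ := (subtype_specializes_iff _ _).mpr (hspec.map continuous_fst) |>.eq
  have hc : c = p.2 := (hspec.map continuous_snd).eq
  subst hb
  linarith

variable [AddCommGroup V] [Module ℝ V] [TopologicalSpace V] [IsTopologicalAddGroup V]
  [ContinuousSMul ℝ V] [LocallyConvexSpace ℝ V] [T1Space K]

theorem ConcaveOnSet.exists_continuous_affine_ge (hKc : IsCompact K) (hK : Convex ℝ K)
    {g : K → ℝ} (hg : ConcaveOnSet K g) (husc : UpperSemicontinuous g) {m : ℝ}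
    (hm : ∀ x, m ≤ g x) {b : K} {c : ℝ} (hbc : g b < c) :
    ∃ a : K → ℝ, Continuous a ∧ AffineOnSet K a ∧ (∀ x, g x ≤ a x) ∧ a b < c := by
  obtain ⟨φ, u, v, hφA, huv, hφbc⟩ := geometric_hahn_banach_compact_closed
    (hg.convex_truncHypograph hK m) (husc.isCompact_truncHypograph hKc m)
    (convex_singleton _).closure isClosed_closure (disjoint_truncHypograph_closure_singleton hbc)
  have hφ : ∀ (w : V) (r : ℝ), φ (w, r) = φ (w, 0) + r * φ (0, 1) := fun w r => by
    rw [← smul_eq_mul, ← map_smul, ← map_add]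
    simp
  have hgu : ∀ x : K, φ ((x : V), 0) + g x * φ (0, 1) < u := fun x =>
    hφ (x : V) (g x) ▸ hφA _ ⟨x.2, hm x, le_rfl⟩
  have hvb : v < φ ((b : V), 0) + c * φ (0, 1) := hφ (b : V) c ▸ hφbc _ (subset_closure rfl)
  have hs : 0 < φ (0, 1) := by
    by_contra! hs
    nlinarith [hgu b]
  -- the separating hyperplane `φ = u`, solved for the `ℝ`-coordinate
  refine ⟨fun x => (u - φ ((x : V), 0)) / φ (0, 1), by fun_prop, ?_, fun x => ?_, ?_⟩
  · intro x y z t _ _ hz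
    have hφz : φ ((z : V), 0) = t * φ ((x : V), 0) + (1 - t) * φ ((y : V), 0) := by
      rw [← smul_eq_mul, ← smul_eq_mul, ← map_smul, ← map_smul, ← map_add]
      simp [hz]
    simp only [hφz]
    field_simp
    ring
  · rw [le_div_iff₀ hs]
    linarith [hgu x]
  · rw [div_lt_iff₀ hs]
    linarith

theorem ConcaveOnSet.supharmonicOnSet [MeasurableSpace V] [OpensMeasurableSpace V]
    (hKc : IsCompact K) (hK : Convex ℝ K) {g : K → ℝ} (hg : ConcaveOnSet K g)
    (husc : UpperSemicontinuous g) {m : ℝ} (hm : ∀ x, m ≤ g x) : SupharmonicOnSet K g := by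
  intro b Q _ hbary
  have : CompactSpace K := isCompact_iff_compactSpace.mp hKc
  by_contra! hlt
  obtain ⟨a, ha_cont, ha_aff, hga, hab⟩ := hg.exists_continuous_affine_ge hKc hK husc hm hlt
  obtain ⟨M, hM⟩ := (husc.upperSemicontinuousOn univ).bddAbove_of_isCompact isCompact_univ
  have hg_int : Integrable g Q := .of_bound husc.measurable.aestronglyMeasurable (max |m| |M|)
    (.of_forall fun x => abs_le_max_abs_abs (hm x) (hM ⟨x, mem_univ _, rfl⟩))
  have ha_int : Integrable a Q := ha_cont.integrable_of_hasCompactSupport (.of_compactSpace a)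
  have := calc ∫ x, g x ∂Q ≤ ∫ x, a x ∂Q := integral_mono hg_int ha_int hga
    _ = a b := (hbary a ha_cont ha_aff).symm
  linarith

end Supharmonic

theorem uSeq_concave_supharmonic_general
    {V : Type*} [AddCommGroup V] [Module ℝ V] [TopologicalSpace V] [IsTopologicalAddGroup V]
    [ContinuousSMul ℝ V] [LocallyConvexSpace ℝ V] [MeasurableSpace V] [BorelSpace V]
    (K : Set V) (hKc : IsCompact K) (hKconv : Convex ℝ K)
    (hKmetr : TopologicalSpace.MetrizableSpace K)
    (H : CandidateSeq K) (hharm : ∀ k, HarmonicOnSet K (H.h k)) (γ : Ordinal) :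
    (∀ (x y z : K) (t : ℝ), 0 ≤ t → t ≤ 1 →
        (z : V) = t • (x : V) + (1 - t) • (y : V) →
        ENNReal.ofReal t * H.u γ x + ENNReal.ofReal (1 - t) * H.u γ y ≤ H.u γ z) ∧
      ((∀ x, H.u γ x ≠ ⊤) →
        SupharmonicOnSet K (fun x : K => (H.u γ x).toReal)) := by
  have hconc : EConcaveOnSet K (H.u γ) :=
    H.eConcaveOnSet_u hKconv (fun k => (hharm k).affineOnSet) γ
  refine ⟨hconc, fun hfin => ?_⟩
  exact (hconc.toReal hfin).supharmonicOnSet hKc hKconv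
    ((H.upperSemicontinuous_u γ).ennreal_toReal hfin) fun _ => ENNReal.toReal_nonneg

/-- **Concavity and supharmonicity of the transfinite sequence** (Fact 2.5 (5)): if `H` is a
harmonic candidate sequence on a metrizable Choquet simplex `K`, then for every ordinal `γ`
the function `u_γ^H` is concave; moreover, whenever `u_γ^H` is real-valued (hence u.s.c.),
it is supharmonic. -/
theorem uSeq_concave_supharmonic
    {V : Type*} [AddCommGroup V] [Module ℝ V] [TopologicalSpace V] [IsTopologicalAddGroup V]
    [ContinuousSMul ℝ V] [LocallyConvexSpace ℝ V] [MeasurableSpace V] [BorelSpace V]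
    (K : Set V) (hKc : IsCompact K) (hKconv : Convex ℝ K)
    (hKmetr : TopologicalSpace.MetrizableSpace K)
    (P : K → MeasureTheory.Measure K) (hP : IsChoquetKernel K P)
    (H : CandidateSeq K) (hharm : ∀ k, HarmonicOnSet K (H.h k)) (γ : Ordinal) :
    (∀ (x y z : K) (t : ℝ), 0 ≤ t → t ≤ 1 →
        (z : V) = t • (x : V) + (1 - t) • (y : V) →
        ENNReal.ofReal t * H.u γ x + ENNReal.ofReal (1 - t) * H.u γ y ≤ H.u γ z) ∧
      ((∀ x, H.u γ x ≠ ⊤) →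
        SupharmonicOnSet K (fun x : K => (H.u γ x).toReal)) :=
  uSeq_concave_supharmonic_general K hKc hKconv hKmetr H hharm γ
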